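/- Assume that ⟨α^∨, q⟩ ≥ 0 for every q ∈ Q and that condition (∗)_α holds, and let F denote the facet F_α provided by (∗)_α. Then for every q ∈ Q one has ⟨α^∨|_Ξ − ρ_F, q − ω⟩ + ⟨α^∨, ω⟩ − m_{F,ω} ≥ 0, where α^∨|_Ξ denotes the restriction of α^∨ to Ξ. -/

import Mathlib

variable {V : Type*} [AddCommGroup V] [Module ℚ V]

/-- `F` is a facet of the polytope `Q`: a nonempty proper exposed face of
codimension one. -/
def IsFacet (Q F : Set V) : Prop :=
  F.Nonempty ∧ F ≠ Q ∧
    (∃ (f : V →ₗ[ℚ] ℚ) (c : ℚ), (∀ q ∈ Q, c ≤ f q) ∧ F = {q ∈ Q | f q = c}) ∧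
    Module.finrank ℚ ↥((affineSpan ℚ F).direction) + 1 =
      Module.finrank ℚ ↥((affineSpan ℚ Q).direction)

/-- `ρ` and `m` form the primitive inward-pointing normal data of the facet `F` of
the polytope `Q`, relative to the lattice `Ξ` and the base point `ω`: `ρ` represents
an element of `Hom_ℤ(Ξ,ℤ)` (it is integer valued on `Ξ`) which is primitive (it
attains the value `1` on `Ξ`), and the affine functional `q ↦ ρ (q - ω) + m` is
nonnegative on `Q` and vanishes exactly on `F`. -/
def IsNormalData (Ξ : Submodule ℤ V) (Q : Set V) (ω : V) (F : Set V)
    (ρ : V →ₗ[ℚ] ℚ) (m : ℚ) : Prop :=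
  (∀ x ∈ Ξ, ∃ n : ℤ, ρ x = (n : ℚ)) ∧ (∃ x ∈ Ξ, ρ x = 1) ∧
    (∀ q ∈ Q, 0 ≤ ρ (q - ω) + m) ∧ (∀ q ∈ Q, (ρ (q - ω) + m = 0 ↔ q ∈ F))

/-- `α` is a primitive element of the lattice `Ξ`. -/
def IsPrimitiveIn (Ξ : Submodule ℤ V) (α : V) : Prop :=
  α ∈ Ξ ∧ α ≠ 0 ∧ ∀ (n : ℤ) (x : V), x ∈ Ξ → α = n • x → n = 1 ∨ n = -1

/-! Put `l = α^∨ - ρ_F`, so that `l α = 1`, and let `v₀` be a vertex of `Q` minimising `l`.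
Tilting `l` by functionals that vanish on `α` and on the current minimal face keeps `l α = 1`
and `v₀` minimal while the face grows, until the face and `α` together span the direction of
`Q`: then the face is a facet `F'` through `v₀` whose normal is positive on `α`. By `(∗)_α`,
`v₀` lies on `H_F`, where the claimed quantity equals `⟨α^∨, v₀⟩ ≥ 0`, or on `s_α(H_F)`, where
it equals `0`; as it is `l` plus a constant, it is nonnegative on all of `Q`. -/

open Module

theorem Finset.exists_pos_add_mul_nonneg_and_eq_zero {ι 𝕜 : Type*} [Field 𝕜] [LinearOrder 𝕜]
    [IsStrictOrderedRing 𝕜] {s : Finset ι} {a b : ι → 𝕜} (ha : ∀ i ∈ s, 0 ≤ a i)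
    (hab : ∀ i ∈ s, b i < 0 → 0 < a i) {i₀ : ι} (hi₀ : i₀ ∈ s) (hb : b i₀ < 0) :
    ∃ t : 𝕜, 0 < t ∧ (∀ i ∈ s, 0 ≤ a i + t * b i) ∧ ∃ i ∈ s, b i < 0 ∧ a i + t * b i = 0 := by
  classical
  obtain ⟨j, hj, hmin⟩ := (s.filter (b · < 0)).exists_min_image (fun i => a i / -b i)
    ⟨i₀, Finset.mem_filter.mpr ⟨hi₀, hb⟩⟩
  obtain ⟨hjs, hbj⟩ := Finset.mem_filter.mp hj
  refine ⟨a j / -b j, div_pos (hab j hjs hbj) (neg_pos.mpr hbj), fun i hi => ?_,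
    j, hjs, hbj, by field_simp [hbj.ne]; ring⟩
  by_cases hbi : b i < 0
  · have := (le_div_iff₀ (neg_pos.mpr hbi)).mp (hmin i (Finset.mem_filter.mpr ⟨hi, hbi⟩))
    linarith
  · exact add_nonneg (ha i hi)
      (mul_nonneg (div_pos (hab j hjs hbj) (neg_pos.mpr hbj)).le (not_lt.mp hbi))

theorem exists_dual_forall_eq_zero_and_neg {U : Submodule ℚ V} {x : V} (hx : x ∉ U) :
    ∃ μ : V →ₗ[ℚ] ℚ, (∀ u ∈ U, μ u = 0) ∧ μ x < 0 := by
  obtain ⟨f, hfx, hfU⟩ := U.exists_dual_map_eq_bot_of_notMem hx inferInstance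
  refine ⟨-(f x)⁻¹ • f, fun u hu => ?_, by simp [hfx]⟩
  have : f u = 0 := (LinearMap.le_ker_iff_map.mpr hfU) hu
  simp [this]

theorem finrank_add_one_eq_of_le_sup_span_singleton [FiniteDimensional ℚ V]
    {D W : Submodule ℚ V} {α : V} (hDW : D ≤ W) (hαW : α ∈ W)
    (hαD : α ∉ D) (hW : W ≤ D ⊔ ℚ ∙ α) : finrank ℚ D + 1 = finrank ℚ W := by
  have hα : α ≠ 0 := fun h => hαD (h ▸ D.zero_mem)
  have hWeq : W = D ⊔ ℚ ∙ α :=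
    le_antisymm hW (sup_le hDW ((Submodule.span_singleton_le_iff_mem α W).mpr hαW))
  have hinf : D ⊓ ℚ ∙ α = ⊥ :=
    disjoint_iff.mp ((Submodule.disjoint_span_singleton' hα).mpr hαD)
  have := Submodule.finrank_sup_add_finrank_inf_eq D (ℚ ∙ α)
  rw [hinf, finrank_bot, finrank_span_singleton hα, ← hWeq] at this
  omega

theorem vectorSpan_le_ker_of_forall_eq {F : Set V} {f : V →ₗ[ℚ] ℚ} {c : ℚ}
    (h : ∀ x ∈ F, f x = c) : vectorSpan ℚ F ≤ LinearMap.ker f := by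
  rw [vectorSpan_def, Submodule.span_le]
  rintro _ ⟨a, ha, b, hb, rfl⟩
  simp [h a ha, h b hb]

theorem eq_of_mem_affineSpan_of_forall_eq {F : Set V} {f : V →ₗ[ℚ] ℚ} {c : ℚ}
    (h : ∀ x ∈ F, f x = c) {x : V} (hx : x ∈ affineSpan ℚ F) : f x = c := by
  obtain ⟨p, hp⟩ := (affineSpan_nonempty (k := ℚ)).mp ⟨x, hx⟩
  have hxp : x - p ∈ LinearMap.ker f := vectorSpan_le_ker_of_forall_eq h <| by
    rw [← direction_affineSpan]
    exact AffineSubspace.vsub_mem_direction hx (subset_affineSpan ℚ F hp)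
  rwa [LinearMap.mem_ker, map_sub, h p hp, sub_eq_zero] at hxp

theorem le_of_mem_convexHull {s : Set V} {f : V →ₗ[ℚ] ℚ} {c : ℚ} (h : ∀ b ∈ s, c ≤ f b)
    {q : V} (hq : q ∈ convexHull ℚ s) : c ≤ f q :=
  convexHull_min h (convex_halfSpace_ge f.isLinear c) hq

theorem vectorSpan_convexHull_le {s : Set V} {v : V} {U : Submodule ℚ V}
    (h : ∀ b ∈ s, b - v ∈ U) : vectorSpan ℚ (convexHull ℚ s) ≤ U := by
  rw [← direction_affineSpan, affineSpan_convexHull]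
  have hs : affineSpan ℚ s ≤ AffineSubspace.mk' v U :=
    affineSpan_le.mpr fun b hb => AffineSubspace.mem_mk'.mpr (h b hb)
  simpa using AffineSubspace.direction_le hs

theorem Submodule.FG.exists_nonneg_eq_span_singleton {M : Submodule ℤ ℚ} (hM : M.FG) :
    ∃ r : ℚ, 0 ≤ r ∧ M = span ℤ {r} := by
  have : M.IsPrincipal := FractionalIdeal.isPrincipal
    ⟨M, FractionalIdeal.isFractional_of_fg (S := nonZeroDivisors ℤ) hM⟩
  obtain ⟨r, hr⟩ := this.principal
  rcases le_total 0 r with h | h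
  · exact ⟨r, h, hr⟩
  · exact ⟨-r, neg_nonneg.mpr h, by rw [hr, ← span_neg, Set.neg_singleton]⟩

theorem IsFacet.subset {Q F : Set V} (hF : IsFacet Q F) : F ⊆ Q := by
  obtain ⟨-, -, ⟨f, c, -, rfl⟩, -⟩ := hF
  exact Set.sep_subset _ _

theorem IsNormalData.eq_of_mem_affineSpan {Ξ : Submodule ℤ V} {Q F : Set V} {ω : V}
    {ρ : V →ₗ[ℚ] ℚ} {m : ℚ} (hρ : IsNormalData Ξ Q ω F ρ m) (hF : IsFacet Q F) {x : V}
    (hx : x ∈ affineSpan ℚ F) : ρ x = ρ ω - m :=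
  eq_of_mem_affineSpan_of_forall_eq (fun y hy => by
    linarith [map_sub ρ y ω, (hρ.2.2.2 y (hF.subset hy)).mpr hy]) hx

theorem vectorSpan_eq_span_sub {Q : Set V} {ω : V} (hω : ω ∈ Q) :
    vectorSpan ℚ Q = Submodule.span ℚ {x : V | ∃ q ∈ Q, x = q - ω} := by
  rw [vectorSpan_eq_span_vsub_set_right ℚ hω]
  congr 1
  ext
  simp [eq_comm]

theorem exists_pos_mul_primitive_of_fg {Ξ : Submodule ℤ V} (hΞ : Ξ.FG) (f : V →ₗ[ℚ] ℚ)
    {α : V} (hα : α ∈ Ξ) (hfα : f α ≠ 0) :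
    ∃ g : ℚ, 0 < g ∧ (∀ x ∈ Ξ, ∃ n : ℤ, g * f x = n) ∧ ∃ x ∈ Ξ, g * f x = 1 := by
  obtain ⟨r, hr0, hr⟩ := (hΞ.map (f.restrictScalars ℤ)).exists_nonneg_eq_span_singleton
  have hmem : ∀ x ∈ Ξ, ∃ n : ℤ, f x = n * r := fun x hx => by
    have hfx : f x ∈ Ξ.map (f.restrictScalars ℤ) := ⟨x, hx, rfl⟩
    obtain ⟨n, hn⟩ := Submodule.mem_span_singleton.mp (hr ▸ hfx)
    exact ⟨n, by rw [← hn, zsmul_eq_mul]⟩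
  have hrpos : 0 < r := by
    obtain ⟨n, hn⟩ := hmem α hα
    exact hr0.lt_of_ne fun h => hfα (by rw [hn, ← h, mul_zero])
  obtain ⟨x, hx, hxr⟩ : r ∈ Ξ.map (f.restrictScalars ℤ) :=
    hr ▸ Submodule.mem_span_singleton_self r
  refine ⟨r⁻¹, inv_pos.mpr hrpos, fun y hy => ?_, x, hx, ?_⟩
  · obtain ⟨n, hn⟩ := hmem y hy
    exact ⟨n, by rw [hn]; field_simp⟩
  · rw [LinearMap.coe_restrictScalars] at hxr
    rw [hxr, inv_mul_cancel₀ hrpos.ne']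

theorem exists_tilt_vectorSpan_lt {s : Finset V} {Q : Set V} (hQ : Q = convexHull ℚ (s : Set V))
    {α v₀ : V} {f : V →ₗ[ℚ] ℚ} {c : ℚ} (hfα : f α = 1) (hsupp : ∀ b ∈ s, c ≤ f b)
    (hv₀ : v₀ ∈ Q) (hfv₀ : f v₀ = c)
    (hW : ¬vectorSpan ℚ Q ≤ vectorSpan ℚ {q ∈ Q | f q = c} ⊔ ℚ ∙ α) :
    ∃ (f' : V →ₗ[ℚ] ℚ) (c' : ℚ), f' α = 1 ∧ (∀ b ∈ s, c' ≤ f' b) ∧ f' v₀ = c' ∧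
      vectorSpan ℚ {q ∈ Q | f q = c} < vectorSpan ℚ {q ∈ Q | f' q = c'} := by
  set G := {q ∈ Q | f q = c}
  set U := vectorSpan ℚ G ⊔ ℚ ∙ α
  have hv₀G : v₀ ∈ G := ⟨hv₀, hfv₀⟩
  obtain ⟨b₀, hb₀, hb₀U⟩ : ∃ b₀ ∈ s, b₀ - v₀ ∉ U := by
    by_contra! h
    exact hW (hQ ▸ vectorSpan_convexHull_le h)
  obtain ⟨μ, hμU, hμb₀⟩ := exists_dual_forall_eq_zero_and_neg hb₀U
  have hμG : ∀ q ∈ G, μ (q - v₀) = 0 := fun q hq =>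
    hμU _ (Submodule.mem_sup_left (vsub_mem_vectorSpan ℚ hq hv₀G))
  -- `t` is the largest slope keeping `f + t • μ` minimal at `v₀`; it is attained at `b₁`.
  obtain ⟨t, -, hnonneg, b₁, hb₁, hμb₁, hb₁t⟩ :=
    Finset.exists_pos_add_mul_nonneg_and_eq_zero (a := fun b => f b - c)
      (b := fun b => μ (b - v₀)) (fun b hb => sub_nonneg.mpr (hsupp b hb))
      (fun b hb hμb => sub_pos.mpr <| (hsupp b hb).lt_of_ne fun hfb =>
        hμb.ne (hμG b ⟨hQ ▸ subset_convexHull ℚ _ hb, hfb.symm⟩)) hb₀ hμb₀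
  have hshift : ∀ x, (f + t • μ) x - (c + t * μ v₀) = (f x - c) + t * μ (x - v₀) := by
    intro x
    simp only [LinearMap.add_apply, LinearMap.smul_apply, smul_eq_mul, map_sub]
    ring
  refine ⟨f + t • μ, c + t * μ v₀, ?_, fun b hb => ?_, by simp [hfv₀], ?_⟩
  · simp [hfα, hμU α (Submodule.mem_sup_right (Submodule.mem_span_singleton_self α))]
  · linarith [hshift b, hnonneg b hb]
  · set G' := {q ∈ Q | (f + t • μ) q = c + t * μ v₀}
    have hGG' : G ⊆ G' := fun q hq => by
      have hq' := hshift q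
      rw [hμG q hq, hq.2, mul_zero] at hq'
      exact ⟨hq.1, by linarith⟩
    have hb₁G' : b₁ ∈ G' := ⟨hQ ▸ subset_convexHull ℚ _ hb₁, by linarith [hshift b₁]⟩
    refine lt_of_le_of_ne (vectorSpan_mono ℚ hGG') fun h => hμb₁.ne ?_
    exact hμU _ (Submodule.mem_sup_left (h ▸ vsub_mem_vectorSpan ℚ hb₁G' (hGG' hv₀G)))

theorem exists_tilt_vectorSpan_le_sup [FiniteDimensional ℚ V] {s : Finset V} {Q : Set V}
    (hQ : Q = convexHull ℚ (s : Set V)) {α v₀ : V} (f : V →ₗ[ℚ] ℚ) (c : ℚ) (hfα : f α = 1)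
    (hsupp : ∀ b ∈ s, c ≤ f b) (hv₀ : v₀ ∈ Q) (hfv₀ : f v₀ = c) :
    ∃ (f' : V →ₗ[ℚ] ℚ) (c' : ℚ), f' α = 1 ∧ (∀ b ∈ s, c' ≤ f' b) ∧ f' v₀ = c' ∧
      vectorSpan ℚ Q ≤ vectorSpan ℚ {q ∈ Q | f' q = c'} ⊔ ℚ ∙ α := by
  induction hn : finrank ℚ V - finrank ℚ (vectorSpan ℚ {q ∈ Q | f q = c})
    using Nat.strong_induction_on generalizing f c with
  | _ n ih =>
    by_cases hW : vectorSpan ℚ Q ≤ vectorSpan ℚ {q ∈ Q | f q = c} ⊔ ℚ ∙ α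
    · exact ⟨f, c, hfα, hsupp, hfv₀, hW⟩
    obtain ⟨f', c', hf'α, hsupp', hf'v₀, hlt⟩ :=
      exists_tilt_vectorSpan_lt hQ hfα hsupp hv₀ hfv₀ hW
    refine ih _ ?_ f' c' hf'α hsupp' hf'v₀ rfl
    have := Submodule.finrank_lt_finrank_of_lt hlt
    have := Submodule.finrank_le (vectorSpan ℚ {q ∈ Q | f' q = c'})
    omega

theorem isFacet_of_vectorSpan_le_sup [FiniteDimensional ℚ V] {Q : Set V} {f : V →ₗ[ℚ] ℚ}
    {c : ℚ} {α v₀ : V} (hsupp : ∀ q ∈ Q, c ≤ f q) (hv₀ : v₀ ∈ Q) (hfv₀ : f v₀ = c)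
    (hαQ : α ∈ vectorSpan ℚ Q) (hfα : f α ≠ 0)
    (hW : vectorSpan ℚ Q ≤ vectorSpan ℚ {q ∈ Q | f q = c} ⊔ ℚ ∙ α) :
    IsFacet Q {q ∈ Q | f q = c} := by
  have hker : vectorSpan ℚ {q ∈ Q | f q = c} ≤ LinearMap.ker f :=
    vectorSpan_le_ker_of_forall_eq fun x hx => hx.2
  refine ⟨⟨v₀, hv₀, hfv₀⟩, fun hQ => hfα ?_, ⟨f, c, hsupp, rfl⟩, ?_⟩
  · rw [hQ] at hker
    exact hker hαQ
  · rw [direction_affineSpan, direction_affineSpan]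
    exact finrank_add_one_eq_of_le_sup_span_singleton (vectorSpan_mono ℚ (Set.sep_subset _ _))
      hαQ (fun h => hfα (hker h)) hW

theorem isNormalData_of_pos_mul {Ξ : Submodule ℤ V} {Q : Set V} (ω : V) {f : V →ₗ[ℚ] ℚ}
    {c g : ℚ} (hg : 0 < g) (hint : ∀ x ∈ Ξ, ∃ n : ℤ, g * f x = n) (hprim : ∃ x ∈ Ξ, g * f x = 1)
    (hsupp : ∀ q ∈ Q, c ≤ f q) :
    IsNormalData Ξ Q ω {q ∈ Q | f q = c} (g • f) (g * (f ω - c)) := by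
  have hval : ∀ q, (g • f) (q - ω) + g * (f ω - c) = g * (f q - c) := fun q => by
    simp only [LinearMap.smul_apply, smul_eq_mul, map_sub]
    ring
  refine ⟨hint, hprim, fun q hq => ?_, fun q hq => ?_⟩
  · rw [hval]
    exact mul_nonneg hg.le (sub_nonneg.mpr (hsupp q hq))
  · rw [hval, mul_eq_zero, sub_eq_zero]
    simp [hg.ne', hq]

theorem exists_isFacet_mem_of_forall_le [FiniteDimensional ℚ V] {Ξ : Submodule ℤ V}
    (hΞ : Ξ.FG) {s : Finset V} {Q : Set V} (hQ : Q = convexHull ℚ (s : Set V)) (ω : V)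
    {α : V} (hαΞ : α ∈ Ξ) (hαQ : α ∈ vectorSpan ℚ Q) {f : V →ₗ[ℚ] ℚ} (hfα : f α = 1)
    {v₀ : V} (hv₀ : v₀ ∈ Q) (hmin : ∀ b ∈ s, f v₀ ≤ f b) :
    ∃ (F : Set V) (ρ : V →ₗ[ℚ] ℚ) (m : ℚ),
      IsFacet Q F ∧ IsNormalData Ξ Q ω F ρ m ∧ 0 < ρ α ∧ v₀ ∈ F := by
  obtain ⟨f', c', hf'α, hsupp, hf'v₀, hW⟩ :=
    exists_tilt_vectorSpan_le_sup hQ f (f v₀) hfα hmin hv₀ rfl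
  have hsuppQ : ∀ q ∈ Q, c' ≤ f' q := fun q hq => le_of_mem_convexHull hsupp (hQ ▸ hq)
  have hf'α₀ : f' α ≠ 0 := by simp [hf'α]
  obtain ⟨g, hg, hint, hprim⟩ := exists_pos_mul_primitive_of_fg hΞ f' hαΞ hf'α₀
  exact ⟨_, g • f', g * (f' ω - c'), isFacet_of_vectorSpan_le_sup hsuppQ hv₀ hf'v₀ hαQ hf'α₀ hW,
    isNormalData_of_pos_mul ω hg hint hprim hsuppQ, by simpa [hf'α] using hg, hv₀, hf'v₀⟩

theorem statement0_general [FiniteDimensional ℚ V]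
    (Λ Ξ : Submodule ℤ V) (hΞΛ : Ξ ≤ Λ) (hΛfg : Λ.FG)
    (Q : Set V) (hQpoly : ∃ s : Finset V, Q = convexHull ℚ (s : Set V))
    (ω : V) (hω : ω ∈ Q)
    (hQfull : Submodule.span ℚ {x : V | ∃ q ∈ Q, x = q - ω} =
      Submodule.span ℚ (Ξ : Set V))
    (α : V) (hα : IsPrimitiveIn Ξ α)
    (αv : V →ₗ[ℚ] ℚ) (hαvα : αv α = 2)
    (hQα : ∀ q ∈ Q, 0 ≤ αv q)
    (F : Set V) (ρF : V →ₗ[ℚ] ℚ) (m : ℚ)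
    (hF : IsFacet Q F) (hρF : IsNormalData Ξ Q ω F ρF m) (hρFα : ρF α = 1)
    (hstar : ∀ (F' : Set V) (ρ' : V →ₗ[ℚ] ℚ) (m' : ℚ),
      IsFacet Q F' → IsNormalData Ξ Q ω F' ρ' m' → 0 < ρ' α →
        (affineSpan ℚ F' : Set V) = (affineSpan ℚ F : Set V) ∨
        (affineSpan ℚ F' : Set V) =
          (fun x => x - αv x • α) '' (affineSpan ℚ F : Set V)) :
    ∀ q ∈ Q, 0 ≤ (αv (q - ω) - ρF (q - ω)) + αv ω - m := by
  obtain ⟨s, hQ⟩ := hQpoly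
  have hαQ : α ∈ vectorSpan ℚ Q :=
    vectorSpan_eq_span_sub hω ▸ hQfull ▸ Submodule.subset_span hα.1
  have hs : s.Nonempty := Finset.coe_nonempty.mp (convexHull_nonempty_iff.mp ⟨ω, hQ ▸ hω⟩)
  obtain ⟨v₀, hv₀s, hmin⟩ := s.exists_min_image (αv - ρF) hs
  have hv₀ : v₀ ∈ Q := hQ ▸ subset_convexHull ℚ _ hv₀s
  obtain ⟨F', ρ', m', hF', hρ', hρ'α, hv₀F'⟩ := exists_isFacet_mem_of_forall_le
    (hΛfg.of_le hΞΛ) hQ ω hα.1 hαQ (by simp [hαvα, hρFα]; norm_num) hv₀ hmin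
  have hv₀F'_aff : v₀ ∈ (affineSpan ℚ F' : Set V) := subset_affineSpan ℚ F' hv₀F'
  have hv₀_nonneg : 0 ≤ αv v₀ - ρF v₀ + ρF ω - m := by
    rcases hstar F' ρ' m' hF' hρ' hρ'α with h | h <;> rw [h] at hv₀F'_aff
    · linarith [hρF.eq_of_mem_affineSpan hF hv₀F'_aff, hQα v₀ hv₀]
    · obtain ⟨y, hy, rfl⟩ := hv₀F'_aff
      simp only [map_sub, map_smul, smul_eq_mul, hαvα, hρFα]
      linarith [hρF.eq_of_mem_affineSpan hF hy]
  intro q hq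
  have hq' : (αv - ρF) v₀ ≤ (αv - ρF) q := le_of_mem_convexHull hmin (hQ ▸ hq)
  simp only [LinearMap.sub_apply, map_sub] at hq' ⊢
  linarith

theorem statement0 [FiniteDimensional ℚ V]
    (Λ Ξ : Submodule ℤ V) (hΞΛ : Ξ ≤ Λ) (hΛfg : Λ.FG)
    (hΛspan : Submodule.span ℚ (Λ : Set V) = ⊤)
    (Q : Set V) (hQpoly : ∃ s : Finset V, Q = convexHull ℚ (s : Set V))
    (ω : V) (hω : ω ∈ Q)
    (hQΞ : ∀ q ∈ Q, q - ω ∈ Submodule.span ℚ (Ξ : Set V))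
    (hQfull : Submodule.span ℚ {x : V | ∃ q ∈ Q, x = q - ω} =
      Submodule.span ℚ (Ξ : Set V))
    (α : V) (hα : IsPrimitiveIn Ξ α)
    (αv : V →ₗ[ℚ] ℚ) (hαvΛ : ∀ x ∈ Λ, ∃ n : ℤ, αv x = (n : ℚ)) (hαvα : αv α = 2)
    (hQα : ∀ q ∈ Q, 0 ≤ αv q)
    (F : Set V) (ρF : V →ₗ[ℚ] ℚ) (m : ℚ)
    (hF : IsFacet Q F) (hρF : IsNormalData Ξ Q ω F ρF m) (hρFα : ρF α = 1)
    (hstar : ∀ (F' : Set V) (ρ' : V →ₗ[ℚ] ℚ) (m' : ℚ),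
      IsFacet Q F' → IsNormalData Ξ Q ω F' ρ' m' → 0 < ρ' α →
        (affineSpan ℚ F' : Set V) = (affineSpan ℚ F : Set V) ∨
        (affineSpan ℚ F' : Set V) =
          (fun x => x - αv x • α) '' (affineSpan ℚ F : Set V)) :
    ∀ q ∈ Q, 0 ≤ (αv (q - ω) - ρF (q - ω)) + αv ω - m :=
  statement0_general Λ Ξ hΞΛ hΛfg Q hQpoly ω hω hQfull α hα αv hαvα hQα F ρF m hF hρF hρFα hstar
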